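/- arXiv:1506.04136 — 7 statements merged into one kernel-verified Lean document; each statement's English description precedes it below -/
import Mathlib

section
/- Let (μ_n) be a sequence of probability measures on a Polish space weakly converging to μ_∞. Then the support of μ_∞ is contained in lim_n (supp μ_n) := ⋂_{ε>0} ⋃_{k≥1} ⋂_{n≥k} (supp μ_n)^ε. -/
open Set Metric Filter MeasureTheory Topology

def nbh {E : Type*} [MetricSpace E] (B : Set E) (ε : ℝ) : Set E :=
  {x | ∃ y ∈ B, dist x y < ε}

def setLim {E : Type*} [MetricSpace E] (B : ℕ → Set E) : Set E :=
  ⋂ ε > (0 : ℝ), ⋃ k : ℕ, ⋂ n, ⋂ _ : n ≥ k, nbh (B n) ε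

/-- The topological support of a measure on a metric space. -/
def msupp {E : Type*} [MetricSpace E] [MeasurableSpace E] (μ : Measure E) : Set E :=
  {x | ∀ ε > (0 : ℝ), 0 < μ (Metric.ball x ε)}

/-- In a second-countable metric space, any set of positive measure meets the support. -/
lemma exists_msupp_of_pos {E : Type*} [MetricSpace E]
    [SecondCountableTopology E]
    [MeasurableSpace E] (μ : Measure E) {U : Set E} (hU : 0 < μ U) :
    ∃ y ∈ U, y ∈ msupp μ := by
  by_contra h
  push_neg at h
  have h' : ∀ y : U, ∃ r > (0 : ℝ), μ (Metric.ball (y : E) r) = 0 := by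
    rintro ⟨y, hy⟩
    obtain ⟨r, hr, hr'⟩ := by simpa [msupp] using h y hy
    exact ⟨r, hr, hr'⟩
  choose r hr hr' using h'
  obtain ⟨T, hTc, hT⟩ := TopologicalSpace.isOpen_iUnion_countable
    (fun y : U => Metric.ball (y : E) (r y)) (fun y => Metric.isOpen_ball)
  have hUsub : U ⊆ ⋃ i ∈ T, Metric.ball (i : E) (r i) := by
    rw [hT]
    intro y hy
    exact mem_iUnion.2 ⟨⟨y, hy⟩, Metric.mem_ball_self (hr ⟨y, hy⟩)⟩
  have : μ U = 0 := by
    refine measure_mono_null hUsub ?_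
    exact (measure_biUnion_null_iff hTc).2 fun i _ => hr' i
  exact absurd this hU.ne'
theorem support_subset_setLim_support
    {E : Type*} [MetricSpace E] [TopologicalSpace.SeparableSpace E] [CompleteSpace E]
    [MeasurableSpace E] [BorelSpace E]
    (μs : ℕ → ProbabilityMeasure E) (μinf : ProbabilityMeasure E)
    (hconv : Tendsto μs atTop (𝓝 μinf)) :
    msupp (μinf : Measure E) ⊆ setLim (fun n => msupp (μs n : Measure E)) := by
  intro x hx
  simp only [setLim, mem_iInter, mem_iUnion]
  intro ε hε
  have hball : 0 < (μinf : Measure E) (Metric.ball x (ε / 2)) := hx _ (by linarith)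
  have hlim := ProbabilityMeasure.le_liminf_measure_open_of_tendsto hconv
    (Metric.isOpen_ball (x := x) (ε := ε / 2))
  have hliminf : 0 < atTop.liminf fun n => (μs n : Measure E) (Metric.ball x (ε / 2)) :=
    lt_of_lt_of_le hball hlim
  have hev : ∀ᶠ n in atTop, 0 < (μs n : Measure E) (Metric.ball x (ε / 2)) :=
    eventually_lt_of_lt_liminf hliminf
  obtain ⟨k, hk⟩ := hev.exists_forall_of_atTop
  refine ⟨k, ?_⟩
  intro n hn
  obtain ⟨y, hy, hysupp⟩ := exists_msupp_of_pos (μs n : Measure E) (hk n hn)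
  exact ⟨y, hysupp, by
    have := Metric.mem_ball.1 hy
    rw [dist_comm]
    linarith [dist_nonneg (x := x) (y := y)]⟩
end

section
/- Let (μ_n) be probability measures on a Polish space weakly converging to μ_∞. Then for every t > 0, the packing number satisfies M(lim_n supp μ_n, t) ≤ liminf_n M(supp μ_n, t), where M(B,t) is the maximal cardinality of a t-separated subset of B and lim_n A_n := ⋂_{ε>0} ⋃_{k≥1} ⋂_{n≥k} A_n^ε. -/
open Set Metric Filter MeasureTheory Topology

/-- The packing number: supremum of cardinalities of `t`-separated subsets of `B`. -/
noncomputable def Mpack {E : Type*} [MetricSpace E] (B : Set E) (t : ℝ) : ℕ∞ :=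
  ⨆ S ∈ {S : Finset E | ↑S ⊆ B ∧ ∀ x ∈ S, ∀ y ∈ S, x ≠ y → t < dist x y},
    (S.card : ℕ∞)

theorem packing_setLim_le_liminf
    {E : Type*} [MetricSpace E] [TopologicalSpace.SeparableSpace E] [CompleteSpace E]
    [MeasurableSpace E] [BorelSpace E]
    (μs : ℕ → ProbabilityMeasure E) (μinf : ProbabilityMeasure E)
    (hconv : Tendsto μs atTop (𝓝 μinf)) (t : ℝ) (ht : 0 < t) :
    Mpack (setLim (fun n => msupp (μs n : Measure E))) t ≤
      Filter.liminf (fun n => Mpack (msupp (μs n : Measure E)) t) atTop := by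
  classical
  set A : ℕ → Set E := fun n => msupp (μs n : Measure E) with hA
  rw [Mpack]
  refine iSup₂_le fun S hS => ?_
  obtain ⟨hS1, hS2⟩ := hS
  -- find a uniform margin ε
  obtain ⟨ε, hε, hsep⟩ : ∃ ε > (0:ℝ), ∀ x ∈ S, ∀ y ∈ S, x ≠ y → t + 2*ε ≤ dist x y := by
    set P := (S ×ˢ S).filter (fun p => p.1 ≠ p.2) with hPdef
    rcases P.eq_empty_or_nonempty with h | h
    · refine ⟨1, one_pos, fun x hx y hy hxy => ?_⟩
      have hmem : ((x, y) : E × E) ∈ P :=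
        Finset.mem_filter.mpr ⟨Finset.mem_product.mpr ⟨hx, hy⟩, hxy⟩
      exact absurd hmem (h ▸ Finset.notMem_empty _)
    · set m := P.inf' h (fun p => dist p.1 p.2) with hm
      have htm : t < m := by
        rw [hm, Finset.lt_inf'_iff]
        intro p hp
        rw [hPdef, Finset.mem_filter, Finset.mem_product] at hp
        exact hS2 p.1 hp.1.1 p.2 hp.1.2 hp.2
      refine ⟨(m - t)/2, by linarith, fun x hx y hy hxy => ?_⟩
      have hmem : ((x, y) : E × E) ∈ P :=
        Finset.mem_filter.mpr ⟨Finset.mem_product.mpr ⟨hx, hy⟩, hxy⟩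
      have : m ≤ dist x y := Finset.inf'_le (fun p => dist p.1 p.2) hmem
      linarith
  refine le_liminf_of_le (by isBoundedDefault) ?_
  have hev : ∀ᶠ n in atTop, ∀ x ∈ S, x ∈ nbh (A n) ε := by
    rw [Filter.eventually_all_finset]
    intro x hx
    have hxlim := hS1 hx
    simp only [setLim, mem_iInter, mem_iUnion] at hxlim
    obtain ⟨k, hk⟩ := hxlim ε hε
    exact eventually_atTop.mpr ⟨k, fun n hn => hk n hn⟩
  filter_upwards [hev] with n hn
  have hgex : ∀ x : E, ∃ z, x ∈ S → z ∈ A n ∧ dist x z < ε := by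
    intro x
    by_cases hx : x ∈ S
    · obtain ⟨z, hz1, hz2⟩ := hn x hx
      exact ⟨z, fun _ => ⟨hz1, hz2⟩⟩
    · exact ⟨x, fun h => absurd h hx⟩
  choose g hg using hgex
  have hinj : Set.InjOn g ↑S := by
    intro x hx y hy hgxy
    by_contra hxy
    have h1 := (hg x hx).2
    have h2 := (hg y hy).2
    have h3 := hsep x hx y hy hxy
    have : dist x y ≤ dist x (g x) + dist (g y) y := by
      rw [hgxy]; exact dist_triangle _ _ _
    rw [dist_comm (g y) y] at this
    linarith
  set T := S.image g with hT
  have hTcard : T.card = S.card := Finset.card_image_of_injOn hinj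
  have hTmem : T ∈ {S : Finset E | ↑S ⊆ A n ∧
      ∀ x ∈ S, ∀ y ∈ S, x ≠ y → t < dist x y} := by
    constructor
    · intro z hz
      simp only [hT, Finset.coe_image, Set.mem_image, Finset.mem_coe] at hz
      obtain ⟨x, hx, rfl⟩ := hz
      exact (hg x hx).1
    · intro a ha b hb hab
      rw [hT, Finset.mem_image] at ha hb
      obtain ⟨x, hx, rfl⟩ := ha
      obtain ⟨y, hy, rfl⟩ := hb
      have hxy : x ≠ y := fun h => hab (by rw [h])
      have h1 := (hg x hx).2
      have h2 := (hg y hy).2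
      have h3 := hsep x hx y hy hxy
      have h4 : dist x y ≤ dist x (g x) + dist (g x) (g y) + dist (g y) y := by
        calc dist x y ≤ dist x (g y) + dist (g y) y := dist_triangle _ _ _
          _ ≤ dist x (g x) + dist (g x) (g y) + dist (g y) y := by
              have := dist_triangle x (g x) (g y); linarith
      rw [dist_comm (g y) y] at h4
      linarith
  calc (S.card : ℕ∞) = (T.card : ℕ∞) := by rw [hTcard]
    _ ≤ Mpack (A n) t := by
        rw [Mpack]; exact le_biSup (fun S : Finset E => (S.card : ℕ∞)) hTmem
end

section
/- Let (B_n) be a sequence of subsets of a Polish space and suppose ε > 0 is such that the packing number M(lim_k B_k, ε) is finite, where lim_k B_k := ⋂_{δ>0} ⋃_{j≥1} ⋂_{n≥j} B_n^δ. Then there exists n_0 such that for all n > n_0, lim_k B_k ⊆ B_n^{2ε}. -/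
open Set Metric Filter

theorem setLim_subset_nbh_of_finite_packing
    {E : Type*} [MetricSpace E] [TopologicalSpace.SeparableSpace E] [CompleteSpace E]
    (B : ℕ → Set E) (ε : ℝ) (hε : 0 < ε) (hfin : Mpack (setLim B) ε < ⊤) :
    ∃ n₀ : ℕ, ∀ n > n₀, setLim B ⊆ nbh (B n) (2 * ε) := by
  classical
  set L := setLim B with hL
  set P : Finset E → Prop := fun S =>
    ↑S ⊆ L ∧ ∀ x ∈ S, ∀ y ∈ S, x ≠ y → ε < dist x y with hP
  obtain ⟨N, hN⟩ : ∃ N : ℕ, Mpack L ε = N := by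
    lift Mpack L ε to ℕ using hfin.ne with N
    exact ⟨N, rfl⟩
  have hcard : ∀ S : Finset E, P S → S.card ≤ N := by
    intro S hS
    have h1 : (S.card : ℕ∞) ≤ Mpack L ε := by
      rw [Mpack]
      exact le_iSup₂ (f := fun (S : Finset E) _ => (S.card : ℕ∞)) S hS
    rw [hN] at h1
    exact_mod_cast h1
  set A : Set ℕ := {n | ∃ S : Finset E, P S ∧ S.card = n} with hA
  have hA0 : 0 ∈ A := ⟨∅, ⟨by simp, by simp⟩, rfl⟩
  have hAbdd : BddAbove A := ⟨N, fun n ⟨S, hS, hSc⟩ => hSc ▸ hcard S hS⟩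
  obtain ⟨S, hS, hScard⟩ := Nat.sSup_mem ⟨0, hA0⟩ hAbdd
  have hmax : ∀ T : Finset E, P T → T.card ≤ S.card := fun T hT =>
    hScard ▸ le_csSup hAbdd ⟨T, hT, rfl⟩
  have hcover : ∀ x ∈ L, ∃ s ∈ S, dist x s ≤ ε := by
    intro x hx
    by_contra h
    push_neg at h
    have hxS : x ∉ S := by
      intro hxS
      have := h x hxS
      simp at this
      linarith
    have hPins : P (insert x S) := by
      constructor
      · rw [Finset.coe_insert]
        exact Set.insert_subset hx hS.1
      · intro a ha b hb hab
        rcases Finset.mem_insert.1 ha with ha' | ha'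
        · subst ha'
          rcases Finset.mem_insert.1 hb with hb' | hb'
          · exact absurd hb'.symm hab
          · exact h b hb'
        · rcases Finset.mem_insert.1 hb with hb' | hb'
          · subst hb'
            rw [dist_comm]; exact h a ha'
          · exact hS.2 a ha' b hb' hab
    have := hmax _ hPins
    rw [Finset.card_insert_of_notMem hxS] at this
    omega
  have hk : ∀ s ∈ (S : Finset E), ∃ k : ℕ, ∀ n ≥ k, s ∈ nbh (B n) ε := by
    intro s hs
    have hsL := hS.1 hs
    rw [hL, setLim] at hsL
    simp only [Set.mem_iInter] at hsL
    have := hsL ε hε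
    rw [Set.mem_iUnion] at this
    obtain ⟨k, hk⟩ := this
    refine ⟨k, fun n hn => ?_⟩
    simp only [Set.mem_iInter] at hk
    exact hk n hn
  choose! k hk using hk
  refine ⟨S.sup k, fun n hn x hx => ?_⟩
  obtain ⟨s, hs, hxs⟩ := hcover x hx
  have hns : n ≥ k s := le_trans (Finset.le_sup hs) (le_of_lt hn)
  obtain ⟨y, hy, hsy⟩ := hk s hs n hns
  exact ⟨y, hy, by calc dist x y ≤ dist x s + dist s y := dist_triangle x s y
    _ < 2 * ε := by linarith⟩
end

section
/- Let (B_n) be a sequence of closed sets in a metric space and B a closed set with Haus(B | B_n) → 0, i.e. for all ε > 0 eventually B ⊆ B_n^ε. Suppose that for every s > 0 there exists 0 < t < s with liminf_n M(B_n, t) ≤ M(B, t) < ∞. Then some subsequence of (B_n) converges to B in the Hausdorff metric. -/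
open Set Metric Filter

lemma nbh_mono {E : Type*} [MetricSpace E] {B : Set E} {a b : ℝ} (h : a ≤ b) :
    nbh B a ⊆ nbh B b := fun _ ⟨y, hy, hd⟩ => ⟨y, hy, lt_of_lt_of_le hd h⟩

lemma card_le_Mpack {E : Type*} [MetricSpace E] {A : Set E} {t : ℝ} {S : Finset E}
    (h1 : (↑S : Set E) ⊆ A) (h2 : ∀ x ∈ S, ∀ y ∈ S, x ≠ y → t < dist x y) :
    (S.card : ℕ∞) ≤ Mpack A t := by
  unfold Mpack
  apply le_iSup₂ (f := fun (S : Finset E) (_ : S ∈ {S : Finset E | (↑S : Set E) ⊆ A ∧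
    ∀ x ∈ S, ∀ y ∈ S, x ≠ y → t < dist x y}) => (S.card : ℕ∞)) S
  exact ⟨h1, h2⟩

lemma exists_max_pack {E : Type*} [MetricSpace E] {A : Set E} {t : ℝ}
    (hfin : Mpack A t < ⊤) :
    ∃ S : Finset E, ((↑S : Set E) ⊆ A ∧ ∀ x ∈ S, ∀ y ∈ S, x ≠ y → t < dist x y) ∧
      Mpack A t ≤ S.card := by
  set k := (Mpack A t).toNat with hk
  have hkeq : Mpack A t = (k : ℕ∞) := (ENat.coe_toNat hfin.ne).symm
  set s : Set ℕ := {n : ℕ | ∃ S : Finset E, ((↑S : Set E) ⊆ A ∧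
    ∀ x ∈ S, ∀ y ∈ S, x ≠ y → t < dist x y) ∧ S.card = n} with hs
  have hne : s.Nonempty := ⟨0, ∅, ⟨by simp, by simp⟩, rfl⟩
  have hbdd : BddAbove s := by
    refine ⟨k, fun n hn => ?_⟩
    obtain ⟨S, hS, rfl⟩ := hn
    have h1 : (S.card : ℕ∞) ≤ Mpack A t := card_le_Mpack hS.1 hS.2
    rw [hkeq] at h1
    exact_mod_cast h1
  obtain ⟨S, hSP, hScard⟩ := Nat.sSup_mem hne hbdd
  refine ⟨S, hSP, ?_⟩
  have h2 : Mpack A t ≤ ((sSup s : ℕ) : ℕ∞) := by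
    refine iSup₂_le fun S' hS' => ?_
    have hmem : S'.card ∈ s := ⟨S', hS', rfl⟩
    exact Nat.cast_le.mpr (le_csSup hbdd hmem)
  rwa [← hScard] at h2

lemma subset_nbh_of_pack {E : Type*} [MetricSpace E] {A C : Set E} {s t ε : ℝ}
    (ht : 0 < t) (S : Finset E) (hSC : (↑S : Set E) ⊆ C)
    (hmax : Mpack C t ≤ S.card)
    (hε : 0 < ε) (hεs : t + 2 * ε ≤ s)
    (hεsep : ∀ x ∈ S, ∀ y ∈ S, x ≠ y → t + 2 * ε ≤ dist x y)
    (hCA : C ⊆ nbh A ε) (hA : Mpack A t ≤ Mpack C t) :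
    A ⊆ nbh C s := by
  classical
  intro x hx
  by_contra hxC
  have hfar : ∀ y ∈ C, s ≤ dist x y := by
    intro y hy
    by_contra h
    exact hxC ⟨y, hy, lt_of_not_ge h⟩
  have H : ∀ p : E, ∃ y, p ∈ S → y ∈ A ∧ dist p y < ε := by
    intro p
    by_cases hp : p ∈ S
    · obtain ⟨y, hyA, hyd⟩ := hCA (hSC hp)
      exact ⟨y, fun _ => ⟨hyA, hyd⟩⟩
    · exact ⟨x, fun h => absurd h hp⟩
  choose f hf using H
  have hxf : ∀ p ∈ S, t < dist x (f p) := by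
    intro p hp
    have h1 := (hf p hp).2
    have h2 := hfar p (hSC hp)
    have h3 := dist_triangle x (f p) p
    rw [dist_comm (f p) p] at h3
    linarith
  have hff : ∀ p ∈ S, ∀ q ∈ S, p ≠ q → t < dist (f p) (f q) := by
    intro p hp q hq hpq
    have h1 := (hf p hp).2
    have h2 := (hf q hq).2
    have h3 := hεsep p hp q hq hpq
    have h4 : dist p q ≤ dist p (f p) + dist (f p) (f q) + dist (f q) q :=
      calc dist p q ≤ dist p (f q) + dist (f q) q := dist_triangle _ _ _
        _ ≤ (dist p (f p) + dist (f p) (f q)) + dist (f q) q := by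
            gcongr; exact dist_triangle _ _ _
    rw [dist_comm (f q) q] at h4
    linarith
  have hfinj : Set.InjOn f ↑S := by
    intro p hp q hq hfpq
    by_contra hpq
    have h := hff p hp q hq hpq
    rw [hfpq, dist_self] at h
    linarith
  set T : Finset E := insert x (S.image f) with hT
  have hxnot : x ∉ S.image f := by
    intro hmem
    obtain ⟨p, hp, hfp⟩ := Finset.mem_image.mp hmem
    have h := hxf p hp
    rw [hfp, dist_self] at h
    linarith
  have hTcard : T.card = S.card + 1 := by
    rw [hT, Finset.card_insert_of_notMem hxnot, Finset.card_image_of_injOn hfinj]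
  have hT1 : (↑T : Set E) ⊆ A := by
    intro a ha
    rw [hT] at ha
    simp only [Finset.coe_insert, Set.mem_insert_iff, Finset.coe_image,
      Set.mem_image] at ha
    rcases ha with rfl | ⟨p, hp, rfl⟩
    · exact hx
    · exact (hf p (by exact_mod_cast hp)).1
  have hT2 : ∀ a ∈ T, ∀ b ∈ T, a ≠ b → t < dist a b := by
    intro a ha b hb hab
    rw [hT, Finset.mem_insert] at ha hb
    rcases ha with rfl | ha
    · rcases hb with rfl | hb
      · exact absurd rfl hab
      · obtain ⟨p, hp, rfl⟩ := Finset.mem_image.mp hb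
        exact hxf p hp
    · obtain ⟨p, hp, rfl⟩ := Finset.mem_image.mp ha
      rcases hb with rfl | hb
      · rw [dist_comm]; exact hxf p hp
      · obtain ⟨q, hq, rfl⟩ := Finset.mem_image.mp hb
        have hpq : p ≠ q := fun h => hab (by rw [h])
        exact hff p hp q hq hpq
  have h1 : (T.card : ℕ∞) ≤ Mpack A t := card_le_Mpack hT1 hT2
  have h2 : ((S.card + 1 : ℕ) : ℕ∞) ≤ (S.card : ℕ∞) := by
    rw [← hTcard]
    exact h1.trans (hA.trans hmax)
  have h3 : S.card + 1 ≤ S.card := by exact_mod_cast h2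
  omega

theorem hausdorff_subseq_of_packing
    {E : Type*} [MetricSpace E]
    (B : ℕ → Set E) (C : Set E) (hBn : ∀ n, IsClosed (B n)) (hC : IsClosed C)
    (hcontrast : ∀ ε > (0 : ℝ), ∃ N : ℕ, ∀ n ≥ N, C ⊆ nbh (B n) ε)
    (hpack : ∀ s > (0 : ℝ), ∃ t : ℝ, 0 < t ∧ t < s ∧
      Filter.liminf (fun n => Mpack (B n) t) atTop ≤ Mpack C t ∧ Mpack C t < ⊤) :
    ∃ φ : ℕ → ℕ, StrictMono φ ∧
      ∀ ε > (0 : ℝ), ∃ N : ℕ, ∀ k ≥ N,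
        B (φ k) ⊆ nbh C ε ∧ C ⊆ nbh (B (φ k)) ε := by
  classical
  have key : ∀ s > (0 : ℝ), ∃ᶠ n in atTop, (B n ⊆ nbh C s ∧ C ⊆ nbh (B n) s) := by
    intro s hs
    obtain ⟨t, ht, hts, hlim, hfin⟩ := hpack s hs
    obtain ⟨S, ⟨hSC, hSsep⟩, hmax⟩ := exists_max_pack hfin
    set δ : ℝ := if h : S.offDiag.Nonempty
      then min (s - t) (S.offDiag.inf' h fun p => dist p.1 p.2 - t)
      else s - t with hδ
    have hδpos : 0 < δ := by
      rw [hδ]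
      split
      · rename_i h
        refine lt_min (by linarith) ?_
        rw [Finset.lt_inf'_iff]
        intro p hp
        rw [Finset.mem_offDiag] at hp
        have := hSsep p.1 hp.1 p.2 hp.2.1 hp.2.2
        linarith
      · linarith
    have hδst : δ ≤ s - t := by
      rw [hδ]; split
      · exact min_le_left _ _
      · exact le_refl _
    set ε : ℝ := δ / 2 with hεdef
    have hεpos : 0 < ε := by positivity
    have h2ε : 2 * ε = δ := by rw [hεdef]; ring
    have hεs : t + 2 * ε ≤ s := by linarith
    have hεsep : ∀ x ∈ S, ∀ y ∈ S, x ≠ y → t + 2 * ε ≤ dist x y := by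
      intro p hp q hq hpq
      have hmemo : (p, q) ∈ S.offDiag := Finset.mem_offDiag.mpr ⟨hp, hq, hpq⟩
      have hne2 : S.offDiag.Nonempty := ⟨(p, q), hmemo⟩
      have hd : δ ≤ dist p q - t := by
        rw [hδ, dif_pos hne2]
        exact (min_le_right _ _).trans (Finset.inf'_le _ hmemo)
      linarith
    have hεlt : ε < s := by linarith
    have hfreq : ∃ᶠ n in atTop, Mpack (B n) t ≤ Mpack C t := by
      by_contra hcon
      rw [Filter.not_frequently] at hcon
      have hev : ∀ᶠ n in atTop, Mpack C t + 1 ≤ Mpack (B n) t := by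
        filter_upwards [hcon] with n hn
        exact (ENat.add_one_le_iff hfin.ne).mpr (lt_of_not_ge hn)
      have hle : Mpack C t + 1 ≤ Filter.liminf (fun n => Mpack (B n) t) atTop :=
        Filter.le_liminf_of_le (by isBoundedDefault) hev
      have habs : Mpack C t + 1 ≤ Mpack C t := hle.trans hlim
      have hlt : Mpack C t < Mpack C t := (ENat.add_one_le_iff hfin.ne).mp habs
      exact absurd hlt (lt_irrefl _)
    obtain ⟨N1, hN1⟩ := hcontrast ε hεpos
    rw [Filter.frequently_atTop] at hfreq ⊢
    intro N
    obtain ⟨n, hn, hnle⟩ := hfreq (max N N1)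
    refine ⟨n, le_trans (le_max_left _ _) hn, ?_, ?_⟩
    · exact subset_nbh_of_pack ht S hSC hmax hεpos hεs hεsep
        (hN1 n (le_trans (le_max_right _ _) hn)) hnle
    · exact (hN1 n (le_trans (le_max_right _ _) hn)).trans (nbh_mono hεlt.le)
  have hfreq2 : ∀ k : ℕ, ∃ᶠ n in atTop,
      (B n ⊆ nbh C (1 / (k + 1)) ∧ C ⊆ nbh (B n) (1 / (k + 1))) := by
    intro k
    exact key (1 / (k + 1)) (by positivity)
  obtain ⟨φ, hφmono, hφ⟩ := Filter.extraction_forall_of_frequently hfreq2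
  refine ⟨φ, hφmono, ?_⟩
  intro ε hε
  obtain ⟨N, hN⟩ := exists_nat_one_div_lt hε
  refine ⟨N, fun k hk => ?_⟩
  have hle : (1 : ℝ) / (k + 1) ≤ 1 / (N + 1) := by
    apply one_div_le_one_div_of_le (by positivity)
    have : (N : ℝ) ≤ k := by exact_mod_cast hk
    linarith
  have h := hφ k
  exact ⟨h.1.trans (nbh_mono (hle.trans hN.le)),
    h.2.trans (nbh_mono (hle.trans hN.le))⟩
end

section
/- Let μ be a probability measure on a Polish space, 0 < α < 1, (B_n) closed sets with μ(B_n) ≥ 1−α, and suppose the conditional measures μ(·|B_n) converge weakly to some probability measure μ_∞. Then B := lim_n B_n := ⋂_{ε>0} ⋃_{k≥1} ⋂_{n≥k} B_n^ε satisfies μ(B) ≥ 1−α. -/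
open Set Metric Filter MeasureTheory ProbabilityTheory Topology

theorem measure_setLim_ge_of_conditional_weak_convergence
    {E : Type*} [MetricSpace E] [TopologicalSpace.SeparableSpace E] [CompleteSpace E]
    [MeasurableSpace E] [BorelSpace E]
    (μ : Measure E) [IsProbabilityMeasure μ]
    (α : ℝ) (hα0 : 0 < α) (hα1 : α < 1)
    (B : ℕ → Set E) (hBclosed : ∀ n, IsClosed (B n))
    (hBμ : ∀ n, ENNReal.ofReal (1 - α) ≤ μ (B n))
    (ν : ℕ → ProbabilityMeasure E) (hν : ∀ n, (ν n : Measure E) = μ[|B n])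
    (μinf : ProbabilityMeasure E) (hconv : Tendsto ν atTop (𝓝 μinf)) :
    ENNReal.ofReal (1 - α) ≤ μ (setLim B) := by
  set c : ENNReal := ENNReal.ofReal (1 - α) with hc
  have hc0 : 0 < c := ENNReal.ofReal_pos.mpr (by linarith)
  have hBne : ∀ n, μ (B n) ≠ 0 := fun n => (lt_of_lt_of_le hc0 (hBμ n)).ne'
  have hBnt : ∀ n, μ (B n) ≠ ⊤ := fun n => measure_ne_top μ _
  -- Step 1: for every open U, c * μ⊤ U ≤ μ U
  have h_open : ∀ U : Set E, IsOpen U → c * (μinf : Measure E) U ≤ μ U := by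
    intro U hU
    have h1 : ∀ n, c * (ν n : Measure E) U ≤ μ U := by
      intro n
      rw [hν n, cond_apply (hBclosed n).measurableSet]
      calc c * ((μ (B n))⁻¹ * μ (B n ∩ U))
          ≤ μ (B n) * ((μ (B n))⁻¹ * μ (B n ∩ U)) := by
            exact mul_le_mul_left (hBμ n) _
        _ = (μ (B n) * (μ (B n))⁻¹) * μ (B n ∩ U) := by ring
        _ = μ (B n ∩ U) := by
            rw [ENNReal.mul_inv_cancel (hBne n) (hBnt n), one_mul]
        _ ≤ μ U := measure_mono inter_subset_right
    have h2 : (μinf : Measure E) U ≤ atTop.liminf fun n => (ν n : Measure E) U :=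
      ProbabilityMeasure.le_liminf_measure_open_of_tendsto hconv hU
    calc c * (μinf : Measure E) U
        ≤ c * atTop.liminf fun n => (ν n : Measure E) U := mul_le_mul_right h2 _
      _ = (atTop.liminf fun _ : ℕ => c) * atTop.liminf fun n => (ν n : Measure E) U := by
          rw [liminf_const]
      _ ≤ atTop.liminf ((fun _ : ℕ => c) * fun n => (ν n : Measure E) U) :=
          ENNReal.le_liminf_mul
      _ ≤ μ U := liminf_le_of_frequently_le' (Frequently.of_forall fun n => h1 n)
  -- Step 2: for every closed C, c * μ⊤ C ≤ μ C
  have h_closed : ∀ C : Set E, IsClosed C → c * (μinf : Measure E) C ≤ μ C := by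
    intro C hC
    have ht : Tendsto (fun r => μ (thickening r C)) (𝓝[>] 0) (𝓝 (μ C)) :=
      tendsto_measure_thickening_of_isClosed ⟨1, one_pos, measure_ne_top μ _⟩ hC
    refine ge_of_tendsto ht ?_
    filter_upwards [self_mem_nhdsWithin] with r (hr : 0 < r)
    calc c * (μinf : Measure E) C
        ≤ c * (μinf : Measure E) (thickening r C) :=
          mul_le_mul_right (measure_mono (self_subset_thickening hr C)) _
      _ ≤ μ (thickening r C) := h_open _ isOpen_thickening
  -- Step 3: the union of all μ⊤-null open sets is null
  set S : Set (Set E) := {V | IsOpen V ∧ (μinf : Measure E) V = 0} with hS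
  obtain ⟨T, hTc, hTS, hTU⟩ :=
    TopologicalSpace.isOpen_sUnion_countable S (fun s hs => hs.1)
  have hU0 : (μinf : Measure E) (⋃₀ S) = 0 := by
    rw [← hTU]
    exact (measure_sUnion_null_iff hTc).mpr fun s hs => (hTS hs).2
  -- Step 4: the complement of ⋃₀ S is contained in setLim B
  have hsub : (⋃₀ S)ᶜ ⊆ setLim B := by
    intro x hx
    simp only [setLim, mem_iInter, mem_iUnion]
    intro ε hε
    -- the ball around x of radius ε/2 has positive μ⊤ measure
    have hball : (μinf : Measure E) (ball x (ε / 2)) ≠ 0 := by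
      intro h0
      exact hx ⟨ball x (ε / 2), ⟨isOpen_ball, h0⟩, mem_ball_self (by linarith)⟩
    have h2 : (μinf : Measure E) (ball x (ε / 2))
        ≤ atTop.liminf fun n => (ν n : Measure E) (ball x (ε / 2)) :=
      ProbabilityMeasure.le_liminf_measure_open_of_tendsto hconv isOpen_ball
    have h3 : ∀ᶠ n in atTop, (0 : ENNReal) < (ν n : Measure E) (ball x (ε / 2)) :=
      eventually_lt_of_lt_liminf (lt_of_lt_of_le (pos_iff_ne_zero.mpr hball) h2)
    obtain ⟨k, hk⟩ := eventually_atTop.mp h3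
    refine ⟨k, fun n hn => ?_⟩
    have hpos := hk n hn
    rw [hν n, cond_apply (hBclosed n).measurableSet] at hpos
    have hne : (B n ∩ ball x (ε / 2)).Nonempty := by
      rw [nonempty_iff_ne_empty]
      intro hemp
      rw [hemp, measure_empty, mul_zero] at hpos
      exact lt_irrefl _ hpos
    obtain ⟨y, hyB, hyb⟩ := hne
    exact ⟨y, hyB, by rw [dist_comm]; calc dist y x < ε / 2 := hyb
                                           _ < ε := by linarith⟩
  -- Step 5: conclude
  have hcompl : (μinf : Measure E) (⋃₀ S)ᶜ = 1 := by
    have hmeas : MeasurableSet (⋃₀ S) := by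
      exact (isOpen_sUnion fun s (hs : s ∈ S) => hs.1).measurableSet
    rw [measure_compl hmeas (measure_ne_top _ _), hU0, measure_univ, tsub_zero]
  have hclosedC : IsClosed (⋃₀ S)ᶜ :=
    (isOpen_sUnion fun s (hs : s ∈ S) => hs.1).isClosed_compl
  calc c = c * (μinf : Measure E) (⋃₀ S)ᶜ := by rw [hcompl, mul_one]
    _ ≤ μ (⋃₀ S)ᶜ := h_closed _ hclosedC
    _ ≤ μ (setLim B) := measure_mono hsub
end

section
/- Let F be a stable class of closed sets of a Polish space (E,d), μ a Borel probability measure, 0 < α < 1, and τ : F → [0,∞] a function satisfying: for any sequence (A_n) ⊆ F, τ(lim_n A_n) ≤ liminf_n τ(A_n). Then there exists B ∈ F attaining the minimum of τ(A) over A ∈ F with μ(A) ≥ 1−α. -/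
open Set Metric Filter MeasureTheory ENNReal

/-- A class of closed sets is stable if it contains the whole space and every
sequence in it admits a subsequence whose set-limit belongs to the class. -/
def StableClass {E : Type*} [MetricSpace E] (F : Set (Set E)) : Prop :=
  Set.univ ∈ F ∧
    ∀ B : ℕ → Set E, (∀ n, B n ∈ F) →
      ∃ φ : ℕ → ℕ, StrictMono φ ∧ setLim (B ∘ φ) ∈ F

/-! Take a minimizing sequence `C n` of admissible sets. Stability only provides *some*
subsequence with limit in `F`, so we first pass to a subsequence `C ∘ ψ` along which every
distance function `infEDist x (C (ψ n))` converges: this holds on a countable dense set by a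
diagonal (sequential compactness) argument, hence everywhere since these functions are
1-Lipschitz. Then every point lying in infinitely many `C (ψ n)` has distance tending to `0`,
so it belongs to the set-limit of every further subsequence; the measure of this `limsup` of
sets is at least `1 - α`. Lower semicontinuity of `τ` makes the set-limit a minimizer. -/

open EMetric Topology

theorem exists_seq_mem_tendsto_sInf_image {α β : Type*} [ConditionallyCompleteLinearOrder β]
    [TopologicalSpace β] [OrderTopology β] [FirstCountableTopology β] (f : α → β) {S : Set α}
    (hS : S.Nonempty) (hbdd : BddBelow (f '' S)) :
    ∃ C : ℕ → α, (∀ n, C n ∈ S) ∧ Tendsto (f ∘ C) atTop (𝓝 (sInf (f '' S))) := by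
  obtain ⟨u, -, hu, hmem⟩ := exists_seq_tendsto_sInf (hS.image f) hbdd
  choose C hCS hfC using hmem
  exact ⟨C, hCS, hu.congr fun n => (hfC n).symm⟩

theorem limsup_measure_le_measure_limsup {α : Type*} [MeasurableSpace α] (μ : Measure α)
    [IsFiniteMeasure μ] {s : ℕ → Set α} (hs : ∀ n, MeasurableSet (s n)) :
    limsup (fun n => μ (s n)) atTop ≤ μ (limsup s atTop) := by
  have hanti : Antitone fun k => ⋃ i ≥ k, s i := fun a b hab =>
    biUnion_mono (fun i hi => le_trans hab hi) fun _ _ => subset_rfl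
  rw [limsup_eq_iInf_iSup_of_nat, limsup_eq_iInf_iSup_of_nat]
  simp only [iInf_eq_iInter, iSup_eq_iUnion]
  rw [hanti.measure_iInter
    (fun k => (MeasurableSet.biUnion (to_countable _) fun i _ => hs i).nullMeasurableSet)
    ⟨0, measure_ne_top _ _⟩]
  exact iInf_mono fun k => iSup₂_le fun i hi => measure_mono (subset_biUnion_of_mem hi)

section EquiLipschitz

variable {E : Type*} [PseudoEMetricSpace E]

theorem exists_tendsto_of_tendsto_denseRange {g : ℕ → E → ℝ≥0∞}
    (hg : ∀ n x y, g n x ≤ g n y + edist x y) {e : ℕ → E} (he : DenseRange e)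
    (hconv : ∀ k, ∃ c, Tendsto (fun n => g n (e k)) atTop (𝓝 c)) (x : E) :
    ∃ c, Tendsto (fun n => g n x) atTop (𝓝 c) := by
  refine ⟨liminf (fun n => g n x) atTop, tendsto_of_le_liminf_of_limsup_le le_rfl ?_⟩
  refine ENNReal.le_of_forall_pos_le_add fun ε hε _ => ?_
  obtain ⟨_, ⟨k, rfl⟩, hk⟩ :=
    EMetric.mem_closure_iff.1 (he x) (ε / 2) (ENNReal.half_pos (by exact_mod_cast hε.ne'))
  obtain ⟨c, hc⟩ := hconv k
  set d := edist x (e k) with hd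
  have hsup : limsup (fun n => g n x) atTop ≤ c + d :=
    calc limsup (fun n => g n x) atTop ≤ limsup (fun n => g n (e k) + d) atTop :=
          limsup_le_limsup (Eventually.of_forall fun n => hg n x (e k))
      _ = c + d := by
          rw [limsup_add_const _ _ _ (by isBoundedDefault) (by isBoundedDefault), hc.limsup_eq]
  have hinf : c ≤ liminf (fun n => g n x) atTop + d :=
    calc c = liminf (fun n => g n (e k)) atTop := hc.liminf_eq.symm
      _ ≤ liminf (fun n => g n x + d) atTop :=
          liminf_le_liminf <| Eventually.of_forall fun n => by
            rw [hd, edist_comm]; exact hg n (e k) x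
      _ = liminf (fun n => g n x) atTop + d :=
          liminf_add_const _ _ _ (by isBoundedDefault) (by isBoundedDefault)
  calc limsup (fun n => g n x) atTop ≤ c + d := hsup
    _ ≤ liminf (fun n => g n x) atTop + d + d := by gcongr
    _ ≤ liminf (fun n => g n x) atTop + ε := by
        rw [add_assoc]
        gcongr
        exact (add_le_add hk.le hk.le).trans_eq (ENNReal.add_halves _)

theorem exists_subseq_tendsto_infEDist [TopologicalSpace.SeparableSpace E] (C : ℕ → Set E) :
    ∃ ψ : ℕ → ℕ, StrictMono ψ ∧
      ∀ x, ∃ c, Tendsto (fun n => infEDist x (C (ψ n))) atTop (𝓝 c) := by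
  cases isEmpty_or_nonempty E
  · exact ⟨id, strictMono_id, isEmptyElim⟩
  obtain ⟨_, ψ, hψ, hlim⟩ := SeqCompactSpace.tendsto_subseq
    fun n (k : ℕ) => infEDist (TopologicalSpace.denseSeq E k) (C n)
  exact ⟨ψ, hψ, exists_tendsto_of_tendsto_denseRange
    (fun _ _ _ => infEDist_le_infEDist_add_edist) (TopologicalSpace.denseRange_denseSeq E)
    fun k => ⟨_, tendsto_pi_nhds.1 hlim k⟩⟩

end EquiLipschitz

section SetLim

variable {E : Type*} [MetricSpace E]

theorem mem_setLim_of_tendsto_infEDist {B : ℕ → Set E} {x : E}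
    (h : Tendsto (fun n => infEDist x (B n)) atTop (𝓝 0)) : x ∈ setLim B := by
  simp only [setLim, mem_iInter, mem_iUnion]
  intro ε hε
  obtain ⟨k, hk⟩ := eventually_atTop.1 (h.eventually_lt_const (ENNReal.ofReal_pos.2 hε))
  refine ⟨k, fun n hn => ?_⟩
  obtain ⟨y, hy, hxy⟩ := infEDist_lt_iff.1 (hk n hn)
  exact ⟨y, hy, edist_lt_ofReal.1 hxy⟩

theorem limsup_subset_setLim_comp {B : ℕ → Set E}
    (hconv : ∀ x, ∃ c, Tendsto (fun n => infEDist x (B n)) atTop (𝓝 c))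
    {φ : ℕ → ℕ} (hφ : StrictMono φ) : limsup B atTop ⊆ setLim (B ∘ φ) := by
  intro x hx
  obtain ⟨c, hc⟩ := hconv x
  have hc0 : c = 0 := nonpos_iff_eq_zero.1 <| le_of_tendsto_of_frequently hc <|
    (mem_limsup_iff_frequently_mem.1 hx).mono fun n hn => (infEDist_zero_of_mem hn).le
  exact mem_setLim_of_tendsto_infEDist ((hc0 ▸ hc).comp hφ.tendsto_atTop)

end SetLim

theorem exists_minimizer_general
    {E : Type*} [MetricSpace E] [TopologicalSpace.SeparableSpace E]
    [MeasurableSpace E] [BorelSpace E]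
    (μ : Measure E) [IsProbabilityMeasure μ]
    (F : Set (Set E)) (hFclosed : ∀ A ∈ F, IsClosed A) (hFstable : StableClass F)
    (τ : Set E → ℝ≥0∞)
    (hlsc : ∀ A : ℕ → Set E, (∀ n, A n ∈ F) →
      τ (setLim A) ≤ Filter.liminf (fun n => τ (A n)) atTop)
    (α : ℝ) (hα0 : 0 < α) :
    ∃ B ∈ F, ENNReal.ofReal (1 - α) ≤ μ B ∧
      ∀ A ∈ F, ENNReal.ofReal (1 - α) ≤ μ A → τ B ≤ τ A := by
  set S := {A | A ∈ F ∧ ENNReal.ofReal (1 - α) ≤ μ A}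
  have huniv : univ ∈ S :=
    ⟨hFstable.1, by rw [measure_univ]; exact ofReal_le_one.2 (by linarith)⟩
  obtain ⟨C, hCS, hτC⟩ := 
    exists_seq_mem_tendsto_sInf_image τ ⟨univ, huniv⟩ (OrderBot.bddBelow _)
  obtain ⟨ψ, hψ, hconv⟩ := exists_subseq_tendsto_infEDist C
  obtain ⟨φ, hφ, hBF⟩ := hFstable.2 (C ∘ ψ) fun n => (hCS (ψ n)).1
  refine ⟨_, hBF, ?_, fun A hAF hAμ => ?_⟩
  · calc ENNReal.ofReal (1 - α) ≤ limsup (fun n => μ (C (ψ n))) atTop :=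
          le_limsup_of_frequently_le (Frequently.of_forall fun n => (hCS (ψ n)).2)
            (by isBoundedDefault)
      _ ≤ μ (limsup (C ∘ ψ) atTop) := limsup_measure_le_measure_limsup μ fun n =>
          (hFclosed _ (hCS (ψ n)).1).measurableSet
      _ ≤ μ (setLim ((C ∘ ψ) ∘ φ)) := measure_mono (limsup_subset_setLim_comp hconv hφ)
  · calc τ (setLim ((C ∘ ψ) ∘ φ)) ≤ liminf (fun n => τ (C (ψ (φ n)))) atTop :=
          hlsc _ fun n => (hCS _).1
      _ = sInf (τ '' S) := (hτC.comp (hψ.comp hφ).tendsto_atTop).liminf_eq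
      _ ≤ τ A := sInf_le ⟨A, ⟨hAF, hAμ⟩, rfl⟩

theorem exists_minimizer
    {E : Type*} [MetricSpace E] [TopologicalSpace.SeparableSpace E] [CompleteSpace E]
    [MeasurableSpace E] [BorelSpace E]
    (μ : Measure E) [IsProbabilityMeasure μ]
    (F : Set (Set E)) (hFclosed : ∀ A ∈ F, IsClosed A) (hFstable : StableClass F)
    (τ : Set E → ℝ≥0∞)
    (hlsc : ∀ A : ℕ → Set E, (∀ n, A n ∈ F) →
      τ (setLim A) ≤ Filter.liminf (fun n => τ (A n)) atTop)
    (α : ℝ) (hα0 : 0 < α) (hα1 : α < 1) :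
    ∃ B ∈ F, ENNReal.ofReal (1 - α) ≤ μ B ∧
      ∀ A ∈ F, ENNReal.ofReal (1 - α) ≤ μ A → τ B ≤ τ A :=
  exists_minimizer_general μ F hFclosed hFstable τ hlsc α hα0
end

section
/- Let (E,d) be a metric space, B_n, B closed sets with Haus(B|B_n) → 0, and suppose for every t > 0, liminf_n M(B_n,t) ≤ M(B,t) < ∞. If additionally some x_n ∈ B_n satisfies d(x_n, B) > ε for a fixed ε > 0 and all large n, then a contradiction follows; i.e., it is impossible that B_n ⊄ B^ε for all large n. -/
open Set Metric Filter

theorem no_far_points_of_packing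
    {E : Type*} [MetricSpace E]
    (B : ℕ → Set E) (C : Set E) (hBn : ∀ n, IsClosed (B n)) (hC : IsClosed C)
    (hcontrast : ∀ η > (0 : ℝ), ∃ N : ℕ, ∀ n ≥ N, C ⊆ nbh (B n) η)
    (hpack : ∀ t > (0 : ℝ),
      Filter.liminf (fun n => Mpack (B n) t) atTop ≤ Mpack C t ∧ Mpack C t < ⊤)
    (ε : ℝ) (hε : 0 < ε) (x : ℕ → E)
    (hfar : ∃ N : ℕ, ∀ n ≥ N, x n ∈ B n ∧ ε < Metric.infDist (x n) C) :
    False := by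
  classical
  set t := ε / 2 with ht
  have ht0 : 0 < t := by positivity
  have htε : t < ε := by rw [ht]; linarith
  obtain ⟨hle, hfin⟩ := hpack t ht0
  obtain ⟨m, hm⟩ := WithTop.ne_top_iff_exists.mp hfin.ne
  -- attain the supremum
  have hattain : ∃ S : Finset E, (↑S ⊆ C ∧ ∀ a ∈ S, ∀ b ∈ S, a ≠ b → t < dist a b)
      ∧ S.card = m := by
    rcases Nat.eq_zero_or_eq_succ_pred m with h0 | hsucc
    · exact ⟨∅, ⟨by simp, by simp⟩, by simp [h0]⟩
    · set k := m - 1 with hk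
      have hklt : (k : ℕ∞) < Mpack C t := by
        rw [← hm]
        exact Nat.cast_lt.mpr (Nat.lt_of_lt_of_le (Nat.lt_succ_self k) (le_of_eq hsucc.symm))
      rw [Mpack, lt_iSup_iff] at hklt
      obtain ⟨S, hS⟩ := hklt
      rw [lt_iSup_iff] at hS
      obtain ⟨hSmem, hSk⟩ := hS
      refine ⟨S, hSmem, ?_⟩
      have hle' : (S.card : ℕ∞) ≤ Mpack C t := by
        rw [Mpack]
        exact le_iSup₂ (f := fun S _ => (S.card : ℕ∞)) S hSmem
      rw [← hm] at hle'
      have h1 : k < S.card := by exact_mod_cast hSk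
      have h2 : S.card ≤ m := Nat.cast_le.mp hle'
      omega
  obtain ⟨S, ⟨hSsub, hSsep⟩, hScard⟩ := hattain
  -- choose a tolerance η
  have hη : ∃ η > (0:ℝ), (∀ a ∈ S, ∀ b ∈ S, a ≠ b → t + 2*η < dist a b) ∧ t + η < ε := by
    set P := (S ×ˢ S).filter fun p => p.1 ≠ p.2 with hP
    by_cases hPne : P.Nonempty
    · set s := P.inf' hPne (fun p => dist p.1 p.2) with hs
      have hst : t < s := by
        rw [hs, Finset.lt_inf'_iff]
        rintro ⟨a, b⟩ hab
        rw [hP, Finset.mem_filter, Finset.mem_product] at hab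
        exact hSsep a hab.1.1 b hab.1.2 hab.2
      refine ⟨min ((s - t)/3) ((ε - t)/2), lt_min (by linarith) (by linarith), ?_, ?_⟩
      · intro a ha b hb hne
        have hmem : (a, b) ∈ P := by
          rw [hP, Finset.mem_filter, Finset.mem_product]; exact ⟨⟨ha, hb⟩, hne⟩
        have : s ≤ dist a b := Finset.inf'_le _ hmem
        have h3 : min ((s - t)/3) ((ε - t)/2) ≤ (s - t)/3 := min_le_left _ _
        linarith
      · have := min_le_right ((s - t)/3) ((ε - t)/2); linarith
    · refine ⟨(ε - t)/2, by linarith, ?_, by linarith⟩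
      intro a ha b hb hne
      exact absurd (by rw [hP, Finset.mem_filter, Finset.mem_product]; exact ⟨⟨ha, hb⟩, hne⟩ :
        (a, b) ∈ P) (fun h => hPne ⟨_, h⟩)
  obtain ⟨η, hη0, hηsep, hηε⟩ := hη
  obtain ⟨N₁, hN₁⟩ := hcontrast η hη0
  obtain ⟨N₂, hN₂⟩ := hfar
  -- key lower bound
  have key : ∀ n ≥ max N₁ N₂, ((m : ℕ∞) + 1) ≤ Mpack (B n) t := by
    intro n hn
    have hn1 : n ≥ N₁ := le_trans (le_max_left _ _) hn
    have hn2 : n ≥ N₂ := le_trans (le_max_right _ _) hn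
    obtain ⟨hxB, hxd⟩ := hN₂ n hn2
    set f : E → E := fun y => if h : y ∈ nbh (B n) η then h.choose else y with hf
    have hfspec : ∀ y ∈ S, f y ∈ B n ∧ dist y (f y) < η := by
      intro y hy
      have hy' : y ∈ nbh (B n) η := hN₁ n hn1 (hSsub hy)
      have hy'' : ∃ z ∈ B n, dist y z < η := hy'
      simp only [hf, dif_pos hy']
      exact ⟨hy'.choose_spec.1, hy'.choose_spec.2⟩
    -- distances from x n
    have hxf : ∀ y ∈ S, t < dist (x n) (f y) := by
      intro y hy
      have h1 : infDist (x n) C ≤ dist (x n) y := infDist_le_dist_of_mem (hSsub hy)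
      have h2 : dist (x n) y ≤ dist (x n) (f y) + dist (f y) y := dist_triangle _ _ _
      have h3 : dist y (f y) < η := (hfspec y hy).2
      rw [dist_comm (f y) y] at h2
      linarith
    have hff : ∀ a ∈ S, ∀ b ∈ S, a ≠ b → t < dist (f a) (f b) := by
      intro a ha b hb hne
      have h1 := (hfspec a ha).2
      have h2 := (hfspec b hb).2
      have h3 := hηsep a ha b hb hne
      have h4 : dist a b ≤ dist a (f a) + dist (f a) (f b) + dist (f b) b :=
        dist_triangle4 _ _ _ _
      rw [dist_comm (f b) b] at h4
      linarith
    have hinj : Set.InjOn f ↑S := by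
      intro a ha b hb hab
      by_contra hne
      have := hff a ha b hb hne
      rw [hab, dist_self] at this
      linarith
    set T : Finset E := insert (x n) (S.image f) with hT
    have hxnot : x n ∉ S.image f := by
      intro hx
      rw [Finset.mem_image] at hx
      obtain ⟨y, hy, hxy⟩ := hx
      have := hxf y hy
      rw [hxy, dist_self] at this
      linarith
    have hTcard : T.card = m + 1 := by
      rw [hT, Finset.card_insert_of_notMem hxnot, Finset.card_image_of_injOn hinj, hScard]
    have hTsub : ↑T ⊆ B n := by
      intro a ha
      rw [hT] at ha
      simp only [Finset.coe_insert, Set.mem_insert_iff, Finset.coe_image, Set.mem_image,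
        Finset.mem_coe] at ha
      rcases ha with rfl | ⟨y, hy, rfl⟩
      · exact hxB
      · exact (hfspec y hy).1
    have hTsep : ∀ a ∈ T, ∀ b ∈ T, a ≠ b → t < dist a b := by
      intro a ha b hb hne
      rw [hT, Finset.mem_insert] at ha hb
      rcases ha with rfl | ha <;> rcases hb with rfl | hb
      · exact absurd rfl hne
      · obtain ⟨y, hy, rfl⟩ := Finset.mem_image.mp hb
        exact hxf y hy
      · obtain ⟨y, hy, rfl⟩ := Finset.mem_image.mp ha
        rw [dist_comm]; exact hxf y hy
      · obtain ⟨y, hy, rfl⟩ := Finset.mem_image.mp ha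
        obtain ⟨z, hz, rfl⟩ := Finset.mem_image.mp hb
        have hyz : y ≠ z := fun h => hne (by rw [h])
        exact hff y hy z hz hyz
    calc ((m : ℕ∞) + 1) = (T.card : ℕ∞) := by rw [hTcard]; push_cast; ring
      _ ≤ Mpack (B n) t := by
          rw [Mpack]
          have hTmem : T ∈ {S : Finset E | ↑S ⊆ B n ∧
              ∀ a ∈ S, ∀ b ∈ S, a ≠ b → t < dist a b} := ⟨hTsub, hTsep⟩
          exact le_iSup₂ (f := fun S _ => (S.card : ℕ∞)) T hTmem
  have hliminf : ((m : ℕ∞) + 1) ≤ liminf (fun n => Mpack (B n) t) atTop :=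
    le_liminf_of_le (by isBoundedDefault) (eventually_atTop.mpr ⟨max N₁ N₂, key⟩)
  have : ((m : ℕ∞) + 1) ≤ (m : ℕ∞) := le_trans (le_trans hliminf hle) (le_of_eq hm.symm)
  have h1 : (m : ℕ∞) ≠ ⊤ := WithTop.coe_ne_top
  exact absurd ((ENat.add_one_le_iff h1).mp this) (lt_irrefl _)
end
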